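/- (Soundness for differential terms) If Γ ⊢ t : ω is derivable in the typed differential λ-calculus, then the relation {(γ, s) | s ∈ [[t]]_γ} is a simulation from !Γ to ω*. In particular, given Γ ⊢ t : ω → ω' and Γ ⊢ u : ω with sound interpretations, the interpretation of D t · u, defined by (μ, s') ∈ [[D t · u]]_γ iff (μ + [s], s') ∈ [[t]]_{γ₁} for some s ∈ [[u]]_{γ₂} with γ = γ₁ + γ₂, is a simulation from !Γ to (ω → ω')* = !ω* ⊸ ω'*. -/

import Mathlib

universe u

/-- An interaction system on a set of states `S`. -/
structure IS (S : Type u) where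
  A : S → Type u
  D : (s : S) → A s → Type u
  n : (s : S) → (a : A s) → D s a → S

/-- `r` is a simulation from `w₁` to `w₂`. -/
def IsSim {S₁ S₂ : Type u} (w₁ : IS S₁) (w₂ : IS S₂) (r : S₁ → S₂ → Prop) : Prop :=
  ∀ s₁ s₂, r s₁ s₂ → ∀ a₁ : w₁.A s₁, ∃ a₂ : w₂.A s₂,
    ∀ d₂ : w₂.D s₂ a₂, ∃ d₁ : w₁.D s₁ a₁, r (w₁.n s₁ a₁ d₁) (w₂.n s₂ a₂ d₂)

/-- Relational composition: `(relComp r₂ r₁) s₁ s₃ ↔ ∃ s₂, r₁ s₁ s₂ ∧ r₂ s₂ s₃`. -/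
def relComp {S₁ S₂ S₃ : Type u} (r₂ : S₂ → S₃ → Prop) (r₁ : S₁ → S₂ → Prop) :
    S₁ → S₃ → Prop :=
  fun s₁ s₃ => ∃ s₂, r₁ s₁ s₂ ∧ r₂ s₂ s₃

/-- Synchronous product of interaction systems. -/
def tensor {S₁ S₂ : Type u} (w₁ : IS S₁) (w₂ : IS S₂) : IS (S₁ × S₂) where
  A s := w₁.A s.1 × w₂.A s.2
  D s a := w₁.D s.1 a.1 × w₂.D s.2 a.2
  n s a d := (w₁.n s.1 a.1 d.1, w₂.n s.2 a.2 d.2)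

/-- The unit interaction system `1` on a singleton state space. -/
def unitIS : IS PUnit.{u+1} where
  A _ := PUnit
  D _ _ := PUnit
  n _ _ _ := ⟨⟩

/-- The linear arrow `w₂ ⊸ w₃`. -/
def lolli {S₂ S₃ : Type u} (w₂ : IS S₂) (w₃ : IS S₃) : IS (S₂ × S₃) where
  A s := Σ f : w₂.A s.1 → w₃.A s.2, ∀ a₂ : w₂.A s.1, w₃.D s.2 (f a₂) → w₂.D s.1 a₂
  D s a := Σ a₂ : w₂.A s.1, w₃.D s.2 (a.1 a₂)
  n s a d := (w₂.n s.1 d.1 (a.2 d.1 d.2), w₃.n s.2 (a.1 d.1) d.2)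

/-- Lists of actions for a list of states (multithreading). -/
def listA {S : Type u} (w : IS S) : List S → Type u
  | [] => PUnit
  | s :: l => w.A s × listA w l

/-- Lists of reactions to a list of actions. -/
def listD {S : Type u} (w : IS S) : (l : List S) → listA w l → Type u
  | [], _ => PUnit
  | _ :: l, a => w.D _ a.1 × listD w l a.2

/-- Componentwise next states. -/
def listN {S : Type u} (w : IS S) : (l : List S) → (a : listA w l) → listD w l a → List S
  | [], _, _ => []
  | s :: l, a, d => w.n s a.1 d.1 :: listN w l a.2 d.2

/-- The exponential `!w`, on finite multisets of states. -/
def bang {S : Type u} (w : IS S) : IS (Multiset S) where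
  A μ := Σ' (l : List S) (_ : (↑l : Multiset S) = μ), listA w l
  D _ a := listD w a.1 a.2.2
  n _ a d := ↑(listN w a.1 a.2.2 d)

/-- Pointwise lifting of a relation to finite multisets. -/
def bangRel {S₁ S₂ : Type u} (r : S₁ → S₂ → Prop) :
    Multiset S₁ → Multiset S₂ → Prop :=
  fun μ₁ μ₂ => ∃ (l₁ : List S₁) (l₂ : List S₂), (↑l₁ : Multiset S₁) = μ₁ ∧ (↑l₂ : Multiset S₂) = μ₂ ∧
    List.Forall₂ r l₁ l₂

/-- Simple types over base type variables. -/
inductive Ty : Type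
  | base : ℕ → Ty
  | arrow : Ty → Ty → Ty

/-- Typed variables in a context. -/
inductive Var : List Ty → Ty → Type
  | vz {Γ ω} : Var (ω :: Γ) ω
  | vs {Γ ω ω'} : Var Γ ω → Var (ω' :: Γ) ω

/-- Intrinsically typed λ-terms. -/
inductive Tm : List Ty → Ty → Type
  | var {Γ ω} : Var Γ ω → Tm Γ ω
  | app {Γ ω ω'} : Tm Γ (.arrow ω ω') → Tm Γ ω → Tm Γ ω'
  | lam {Γ ω ω'} : Tm (ω :: Γ) ω' → Tm Γ (.arrow ω ω')

variable (ρ : ℕ → Type) (wρ : ∀ i, IS (ρ i))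

/-- `|ω|`: the set of states of the interpretation of type `ω`. -/
def St : Ty → Type
  | .base i => ρ i
  | .arrow ω ω' => Multiset (St ω) × St ω'

/-- Interpretation of types: `X* = ρ(X)`, `(ω → ω')* = !ω* ⊸ ω'*`. -/
def tyIS : (ω : Ty) → IS (St ρ ω)
  | .base i => wρ i
  | .arrow ω ω' => lolli (bang (tyIS ω)) (tyIS ω')

/-- Environments for a context: a finite multiset of states for each variable. -/
def Env : List Ty → Type
  | [] => PUnit
  | ω :: Γ => Multiset (St ρ ω) × Env Γ

/-- The empty environment. -/
def Env.zero : (Γ : List Ty) → Env ρ Γ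
  | [] => ⟨⟩
  | _ :: Γ => (0, Env.zero Γ)

/-- Pointwise sum of environments. -/
def Env.add : {Γ : List Ty} → Env ρ Γ → Env ρ Γ → Env ρ Γ
  | [], _, _ => ⟨⟩
  | _ :: _, γ, δ => (γ.1 + δ.1, Env.add γ.2 δ.2)

/-- Sum of a list of environments. -/
def envSum {Γ : List Ty} (L : List (Env ρ Γ)) : Env ρ Γ :=
  L.foldr (Env.add ρ) (Env.zero ρ Γ)

/-- The environment assigning the singleton multiset `[s]` to the variable `v`
and the empty multiset to every other variable. -/
def oneAt : {Γ : List Ty} → {ω : Ty} → Var Γ ω → St ρ ω → Env ρ Γ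
  | _, _, .vz, s => ({s}, Env.zero ρ _)
  | _, _, .vs v, s => (0, oneAt v s)

/-- The interpretation `!Γ = !ω₁* ⊗ ⋯ ⊗ !ωₙ*` of a context. -/
def ctxIS : (Γ : List Ty) → IS (Env ρ Γ)
  | [] => unitIS
  | ω :: Γ => tensor (bang (tyIS ρ wρ ω)) (ctxIS Γ)

/-- The relational interpretation of terms. -/
def interp : {Γ : List Ty} → {ω : Ty} → Tm Γ ω → Env ρ Γ → Set (St ρ ω)
  | _, _, .var v, γ => {s | γ = oneAt ρ v s}
  | _, _, .app t u, γ => {s | ∃ (γ₀ : Env ρ _) (L : List (Env ρ _ × St ρ _)),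
      (∀ p ∈ L, p.2 ∈ interp u p.1) ∧
      γ = Env.add ρ γ₀ (envSum ρ (L.map Prod.fst)) ∧
      ((↑(L.map Prod.snd) : Multiset _), s) ∈ interp t γ₀}
  | _, _, .lam t, γ => {p | p.2 ∈ interp t (p.1, γ)}
/-- Intrinsically typed differential λ-terms: λ-terms together with `0`,
sums `t + u` and differentiation `D t · u`. -/
inductive DTm : List Ty → Ty → Type
  | var {Γ ω} : Var Γ ω → DTm Γ ω
  | app {Γ ω ω'} : DTm Γ (.arrow ω ω') → DTm Γ ω → DTm Γ ω'
  | lam {Γ ω ω'} : DTm (ω :: Γ) ω' → DTm Γ (.arrow ω ω')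
  | zero {Γ ω} : DTm Γ ω
  | add {Γ ω} : DTm Γ ω → DTm Γ ω → DTm Γ ω
  | diff {Γ ω ω'} : DTm Γ (.arrow ω ω') → DTm Γ ω → DTm Γ (.arrow ω ω')

/-- The relational interpretation of differential λ-terms. -/
def dinterp : {Γ : List Ty} → {ω : Ty} → DTm Γ ω → Env ρ Γ → Set (St ρ ω)
  | _, _, .var v, γ => {s | γ = oneAt ρ v s}
  | _, _, .app t u, γ => {s | ∃ (γ₀ : Env ρ _) (L : List (Env ρ _ × St ρ _)),
      (∀ p ∈ L, p.2 ∈ dinterp u p.1) ∧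
      γ = Env.add ρ γ₀ (envSum ρ (L.map Prod.fst)) ∧
      ((↑(L.map Prod.snd) : Multiset _), s) ∈ dinterp t γ₀}
  | _, _, .lam t, γ => {p | p.2 ∈ dinterp t (p.1, γ)}
  | _, _, .zero, _ => ∅
  | _, _, .add t u, γ => dinterp t γ ∪ dinterp u γ
  | _, _, .diff t u, γ => {p | ∃ (γ₁ γ₂ : Env ρ _) (s : St ρ _),
      γ = Env.add ρ γ₁ γ₂ ∧ s ∈ dinterp u γ₂ ∧
      (p.1 + {s}, p.2) ∈ dinterp t γ₁}


/-!
Every construct of the calculus is interpreted by a composite of a few structural simulations,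
so soundness follows by induction on the term. Contraction `!Γ → !Γ ⊗ !Γ` reorders the threads
of an action along a permutation and splits them; promotion lifts a simulation `!Γ → ω*` to
`!Γ → !ω*`; application is evaluation `(!ω* ⊸ ω'*) ⊗ !ω* → ω'*`, abstraction is currying, and a
sum is the union of two simulations. The derivative `D t · u` feeds the state produced by `u` to
`t` as one more thread of its argument: it composes `t ⊗ u` with the simulation
`(!ω* ⊸ ω'*) ⊗ ω* → (!ω* ⊸ ω'*)` obtained by precomposing with `!ω* ⊗ ω* → !ω*`,
`(μ, s) ↦ s :: μ`.
-/

namespace IsSim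

variable {S₁ S₂ S₃ T₁ T₂ : Type u} {w₁ : IS S₁} {w₂ : IS S₂} {w₃ : IS S₃}

theorem of_iff {r r' : S₁ → S₂ → Prop} (h : IsSim w₁ w₂ r)
    (hr : ∀ s₁ s₂, r' s₁ s₂ ↔ r s₁ s₂) : IsSim w₁ w₂ r' := by
  obtain rfl : r' = r := funext₂ fun s₁ s₂ => propext (hr s₁ s₂)
  exact h

theorem comp {r₁ : S₁ → S₂ → Prop} {r₂ : S₂ → S₃ → Prop} (h₁ : IsSim w₁ w₂ r₁)
    (h₂ : IsSim w₂ w₃ r₂) : IsSim w₁ w₃ (relComp r₂ r₁) := by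
  rintro s₁ s₃ ⟨s₂, hr₁, hr₂⟩ a₁
  obtain ⟨a₂, h₁⟩ := h₁ s₁ s₂ hr₁ a₁
  obtain ⟨a₃, h₂⟩ := h₂ s₂ s₃ hr₂ a₂
  refine ⟨a₃, fun d₃ => ?_⟩
  obtain ⟨d₂, hd₂⟩ := h₂ d₃
  obtain ⟨d₁, hd₁⟩ := h₁ d₂
  exact ⟨d₁, _, hd₁, hd₂⟩

theorem sup {r r' : S₁ → S₂ → Prop} (h : IsSim w₁ w₂ r) (h' : IsSim w₁ w₂ r') :
    IsSim w₁ w₂ (r ⊔ r') := by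
  rintro s₁ s₂ (hr | hr) a₁
  · obtain ⟨a₂, h⟩ := h s₁ s₂ hr a₁
    exact ⟨a₂, fun d₂ => (h d₂).imp fun _ => Or.inl⟩
  · obtain ⟨a₂, h'⟩ := h' s₁ s₂ hr a₁
    exact ⟨a₂, fun d₂ => (h' d₂).imp fun _ => Or.inr⟩

theorem tensor_map {v₁ : IS T₁} {v₂ : IS T₂} {r₁ : S₁ → T₁ → Prop} {r₂ : S₂ → T₂ → Prop}
    (h₁ : IsSim w₁ v₁ r₁) (h₂ : IsSim w₂ v₂ r₂) :
    IsSim (tensor w₁ w₂) (tensor v₁ v₂) (fun s t => r₁ s.1 t.1 ∧ r₂ s.2 t.2) := by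
  rintro ⟨s₁, s₂⟩ ⟨t₁, t₂⟩ ⟨hr₁, hr₂⟩ ⟨a₁, a₂⟩
  obtain ⟨b₁, h₁⟩ := h₁ s₁ t₁ hr₁ a₁
  obtain ⟨b₂, h₂⟩ := h₂ s₂ t₂ hr₂ a₂
  refine ⟨(b₁, b₂), fun ⟨e₁, e₂⟩ => ?_⟩
  obtain ⟨d₁, hd₁⟩ := h₁ e₁
  obtain ⟨d₂, hd₂⟩ := h₂ e₂
  exact ⟨(d₁, d₂), hd₁, hd₂⟩

theorem curry {r : S₁ × S₂ → S₃ → Prop} (h : IsSim (tensor w₁ w₂) w₃ r) :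
    IsSim w₂ (lolli w₁ w₃) (fun s p => r (p.1, s) p.2) := by
  intro s₂ p hr a₂
  choose f hf using fun a₁ : w₁.A p.1 => h (p.1, s₂) p.2 hr (a₁, a₂)
  choose g hg using hf
  exact ⟨⟨f, fun a₁ d₃ => (g a₁ d₃).1⟩, fun d => ⟨(g d.1 d.2).2, hg d.1 d.2⟩⟩

/-- Precomposition `(v ⊸ w₃) ⊗ u' → (v' ⊸ w₃)` with a simulation `v' ⊗ u' → v`. -/
theorem lolli_precomp {T : Type u} {v v' : IS T} {u' : IS S₂} {r : T × S₂ → T → Prop}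
    (h : IsSim (tensor v' u') v r) :
    IsSim (tensor (lolli v w₃) u') (lolli v' w₃) (fun q p => r (p.1, q.2) q.1.1 ∧ q.1.2 = p.2) := by
  rintro ⟨⟨t, s₃⟩, s₂⟩ ⟨t', _⟩ ⟨hr, rfl⟩ ⟨⟨f, g⟩, b⟩
  choose a ha using fun a' : v'.A t' => h (t', s₂) t hr (a', b)
  choose e he using ha
  refine ⟨⟨fun a' => f (a a'), fun a' d₃ => (e a' (g (a a') d₃)).1⟩, fun ⟨a', d₃⟩ => ?_⟩
  exact ⟨(⟨a a', d₃⟩, (e a' (g (a a') d₃)).2), he a' _, rfl⟩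

end IsSim

theorem isSim_eval {S₁ S₂ : Type u} {w₁ : IS S₁} {w₂ : IS S₂} :
    IsSim (tensor (lolli w₁ w₂) w₁) w₂ (fun q s => q.1 = (q.2, s)) := by
  rintro ⟨⟨s₁, s⟩, _⟩ _ h ⟨⟨f, g⟩, a₁⟩
  obtain ⟨rfl, rfl⟩ := Prod.mk.inj h
  exact ⟨f a₁, fun d => ⟨(⟨a₁, d⟩, g a₁ d), rfl⟩⟩

section Bang

variable {S : Type u} (w : IS S)

theorem exists_listA_of_perm {l l' : List S} (p : l.Perm l') (a : listA w l) :
    ∃ a' : listA w l', ∀ d' : listD w l' a', ∃ d : listD w l a,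
      (listN w l a d : Multiset S) = listN w l' a' d' := by
  induction p with
  | nil => exact ⟨⟨⟩, fun _ => ⟨⟨⟩, rfl⟩⟩
  | cons _ _ ih =>
    obtain ⟨a', h⟩ := ih a.2
    refine ⟨(a.1, a'), fun d' => ?_⟩
    obtain ⟨d, hd⟩ := h d'.2
    exact ⟨(d'.1, d), by simp only [listN, ← Multiset.cons_coe, hd]⟩
  | swap =>
    refine ⟨(a.2.1, a.1, a.2.2), fun d' => ⟨(d'.2.1, d'.1, d'.2.2), ?_⟩⟩
    simp only [listN, ← Multiset.cons_coe, Multiset.cons_swap]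
  | trans _ _ ih₁ ih₂ =>
    obtain ⟨a'', h₁⟩ := ih₁ a
    obtain ⟨a', h₂⟩ := ih₂ a''
    refine ⟨a', fun d' => ?_⟩
    obtain ⟨d'', hd₂⟩ := h₂ d'
    obtain ⟨d, hd₁⟩ := h₁ d''
    exact ⟨d, hd₁.trans hd₂⟩

theorem exists_listA_of_append (l₁ l₂ : List S) (a : listA w (l₁ ++ l₂)) :
    ∃ (a₁ : listA w l₁) (a₂ : listA w l₂), ∀ (d₁ : listD w l₁ a₁) (d₂ : listD w l₂ a₂),
      ∃ d : listD w (l₁ ++ l₂) a,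
        listN w (l₁ ++ l₂) a d = listN w l₁ a₁ d₁ ++ listN w l₂ a₂ d₂ := by
  induction l₁ with
  | nil => exact ⟨⟨⟩, a, fun _ d₂ => ⟨d₂, rfl⟩⟩
  | cons s l₁ ih =>
    obtain ⟨a₁, a₂, h⟩ := ih a.2
    refine ⟨(a.1, a₁), a₂, fun d₁ d₂ => ?_⟩
    obtain ⟨d, hd⟩ := h d₁.2 d₂
    exact ⟨(d₁.1, d), congrArg (w.n s a.1 d₁.1 :: ·) hd⟩

theorem isSim_bang_add :
    IsSim (bang w) (tensor (bang w) (bang w)) (fun μ p => μ = p.1 + p.2) := by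
  rintro _ ⟨μ₁, μ₂⟩ rfl ⟨l, hl, a⟩
  have hp : l.Perm (μ₁.toList ++ μ₂.toList) := by
    rw [← Multiset.coe_eq_coe, hl, ← Multiset.coe_add, Multiset.coe_toList, Multiset.coe_toList]
  obtain ⟨a', h'⟩ := exists_listA_of_perm w hp a
  obtain ⟨a₁, a₂, h⟩ := exists_listA_of_append w μ₁.toList μ₂.toList a'
  refine ⟨(⟨_, Multiset.coe_toList μ₁, a₁⟩, ⟨_, Multiset.coe_toList μ₂, a₂⟩), fun ⟨d₁, d₂⟩ => ?_⟩
  obtain ⟨d', hd'⟩ := h d₁ d₂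
  obtain ⟨d, hd⟩ := h' d'
  exact ⟨d, hd.trans (by rw [hd', ← Multiset.coe_add]; rfl)⟩

theorem isSim_bang_zero : IsSim (bang w) unitIS (fun μ _ => μ = 0) := by
  rintro _ _ rfl ⟨l, hl, a⟩
  obtain rfl := (Multiset.coe_eq_zero l).mp hl
  exact ⟨⟨⟩, fun _ => ⟨⟨⟩, rfl⟩⟩

theorem isSim_bang_singleton : IsSim (bang w) w (fun μ s => μ = {s}) := by
  rintro _ s rfl ⟨l, hl, a⟩
  obtain rfl := Multiset.coe_eq_singleton.mp hl
  exact ⟨a.1, fun d => ⟨(d, ⟨⟩), rfl⟩⟩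

theorem isSim_bang_cons : IsSim (tensor (bang w) w) (bang w) (fun p μ => μ = p.2 ::ₘ p.1) := by
  rintro ⟨μ, s⟩ _ rfl ⟨⟨l, hl, a⟩, b⟩
  exact ⟨⟨s :: l, by rw [← hl]; rfl, (b, a)⟩, fun d => ⟨(d.2, d.1), rfl⟩⟩

end Bang

variable {ρ wρ}

theorem isSim_ctxIS_zero {Γ : List Ty} :
    IsSim (ctxIS ρ wρ Γ) unitIS (fun γ _ => γ = Env.zero ρ Γ) := by
  induction Γ with
  | nil => exact fun _ _ _ _ => ⟨⟨⟩, fun _ => ⟨⟨⟩, rfl⟩⟩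
  | cons ω Γ ih =>
    rintro _ _ rfl ⟨a₁, a₂⟩
    obtain ⟨_, h₁⟩ := isSim_bang_zero (tyIS ρ wρ ω) _ ⟨⟩ rfl a₁
    obtain ⟨_, h₂⟩ := ih _ ⟨⟩ rfl a₂
    refine ⟨⟨⟩, fun _ => ?_⟩
    obtain ⟨d₁, hd₁⟩ := h₁ ⟨⟩
    obtain ⟨d₂, hd₂⟩ := h₂ ⟨⟩
    exact ⟨(d₁, d₂), Prod.ext hd₁ hd₂⟩

theorem isSim_ctxIS_add {Γ : List Ty} :
    IsSim (ctxIS ρ wρ Γ) (tensor (ctxIS ρ wρ Γ) (ctxIS ρ wρ Γ))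
      (fun γ p => γ = Env.add ρ p.1 p.2) := by
  induction Γ with
  | nil => exact fun _ _ _ _ => ⟨(⟨⟩, ⟨⟩), fun _ => ⟨⟨⟩, rfl⟩⟩
  | cons ω Γ ih =>
    rintro _ ⟨γ₁, γ₂⟩ rfl ⟨a, c⟩
    obtain ⟨⟨a₁, a₂⟩, ha⟩ := isSim_bang_add (tyIS ρ wρ ω) _ (γ₁.1, γ₂.1) rfl a
    obtain ⟨⟨c₁, c₂⟩, hc⟩ := ih _ (γ₁.2, γ₂.2) rfl c
    refine ⟨((a₁, c₁), (a₂, c₂)), fun ⟨⟨e₁, f₁⟩, ⟨e₂, f₂⟩⟩ => ?_⟩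
    obtain ⟨d, hd⟩ := ha (e₁, e₂)
    obtain ⟨d', hd'⟩ := hc (f₁, f₂)
    exact ⟨(d, d'), Prod.ext hd hd'⟩

theorem isSim_oneAt {Γ : List Ty} {ω : Ty} (v : Var Γ ω) :
    IsSim (ctxIS ρ wρ Γ) (tyIS ρ wρ ω) (fun γ s => γ = oneAt ρ v s) := by
  induction v with
  | @vz _ ω =>
    rintro _ s rfl ⟨a, c⟩
    obtain ⟨b, hb⟩ := isSim_bang_singleton (tyIS ρ wρ ω) _ s rfl a
    obtain ⟨_, hc⟩ := isSim_ctxIS_zero _ ⟨⟩ rfl c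
    refine ⟨b, fun e => ?_⟩
    obtain ⟨d, hd⟩ := hb e
    obtain ⟨d', hd'⟩ := hc ⟨⟩
    exact ⟨(d, d'), Prod.ext hd hd'⟩
  | @vs _ _ ω' v ih =>
    rintro _ s rfl ⟨a, c⟩
    obtain ⟨_, ha⟩ := isSim_bang_zero (tyIS ρ wρ ω') _ ⟨⟩ rfl a
    obtain ⟨b, hb⟩ := ih _ s rfl c
    refine ⟨b, fun e => ?_⟩
    obtain ⟨d, hd⟩ := ha ⟨⟩
    obtain ⟨d', hd'⟩ := hb e
    exact ⟨(d, d'), Prod.ext hd hd'⟩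

def promote {Γ : List Ty} {ω : Ty} (r : Env ρ Γ → St ρ ω → Prop) (γ : Env ρ Γ)
    (μ : Multiset (St ρ ω)) : Prop :=
  ∃ L : List (Env ρ Γ × St ρ ω),
    (∀ p ∈ L, r p.1 p.2) ∧ γ = envSum ρ (L.map Prod.fst) ∧ μ = ↑(L.map Prod.snd)

theorem IsSim.promote {Γ : List Ty} {ω : Ty} {r : Env ρ Γ → St ρ ω → Prop}
    (hr : IsSim (ctxIS ρ wρ Γ) (tyIS ρ wρ ω) r) :
    IsSim (ctxIS ρ wρ Γ) (bang (tyIS ρ wρ ω)) (promote r) := by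
  rintro _ _ ⟨L, hL, rfl, rfl⟩ a
  induction L with
  | nil =>
    obtain ⟨_, h⟩ := isSim_ctxIS_zero _ ⟨⟩ rfl a
    refine ⟨⟨[], rfl, ⟨⟩⟩, fun _ => ?_⟩
    obtain ⟨d, hd⟩ := h ⟨⟩
    exact ⟨d, [], by simp, hd, rfl⟩
  | cons p L ih =>
    obtain ⟨⟨a₁, a₂⟩, hsplit⟩ := isSim_ctxIS_add _ (p.1, envSum ρ (L.map Prod.fst)) rfl a
    obtain ⟨b, hb⟩ := hr _ _ (hL p (.head _)) a₁
    obtain ⟨B, hB⟩ := ih (fun q hq => hL q (.tail _ hq)) a₂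
    obtain ⟨B', hcons⟩ := isSim_bang_cons (tyIS ρ wρ ω) (_, p.2) _ rfl (B, b)
    refine ⟨B', fun e => ?_⟩
    obtain ⟨⟨eB, eb⟩, he⟩ := hcons e
    obtain ⟨d₁, hd₁⟩ := hb eb
    obtain ⟨d₂, L', hL', hd₂, hB'⟩ := hB eB
    obtain ⟨d, hd⟩ := hsplit (d₁, d₂)
    refine ⟨d, (_, _) :: L', ?_, hd.trans (congrArg _ hd₂), he.trans (congrArg _ hB')⟩
    rintro q (_ | ⟨_, hq⟩)
    exacts [hd₁, hL' q hq]

theorem isSim_dinterp_app {Γ : List Ty} {ω ω' : Ty} {t : DTm Γ (.arrow ω ω')} {u : DTm Γ ω}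
    (ht : IsSim (ctxIS ρ wρ Γ) (tyIS ρ wρ (.arrow ω ω')) (fun γ s => s ∈ dinterp ρ t γ))
    (hu : IsSim (ctxIS ρ wρ Γ) (tyIS ρ wρ ω) (fun γ s => s ∈ dinterp ρ u γ)) :
    IsSim (ctxIS ρ wρ Γ) (tyIS ρ wρ ω') (fun γ s => s ∈ dinterp ρ (.app t u) γ) := by
  refine ((isSim_ctxIS_add.comp (ht.tensor_map hu.promote)).comp isSim_eval).of_iff
    fun γ s => ⟨?_, ?_⟩
  · rintro ⟨γ₀, L, hL, rfl, hs⟩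
    exact ⟨((_, s), _), ⟨(γ₀, _), rfl, hs, L, hL, rfl, rfl⟩, rfl⟩
  · rintro ⟨⟨f, _⟩, ⟨⟨γ₀, _⟩, rfl, hs, L, hL, rfl, rfl⟩, hf⟩
    obtain rfl : f = (↑(L.map Prod.snd), s) := hf
    exact ⟨γ₀, L, hL, rfl, hs⟩

theorem isSim_dinterp_diff {Γ : List Ty} {ω ω' : Ty} {t : DTm Γ (.arrow ω ω')} {u : DTm Γ ω}
    (ht : IsSim (ctxIS ρ wρ Γ) (tyIS ρ wρ (.arrow ω ω')) (fun γ s => s ∈ dinterp ρ t γ))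
    (hu : IsSim (ctxIS ρ wρ Γ) (tyIS ρ wρ ω) (fun γ s => s ∈ dinterp ρ u γ)) :
    IsSim (ctxIS ρ wρ Γ) (tyIS ρ wρ (.arrow ω ω'))
      (fun γ s => s ∈ dinterp ρ (.diff t u) γ) := by
  refine ((isSim_ctxIS_add.comp (ht.tensor_map hu)).comp
    (isSim_bang_cons _).lolli_precomp).of_iff fun γ p => ⟨?_, ?_⟩
  · rintro ⟨γ₁, γ₂, s, rfl, hs, hts⟩
    exact ⟨((_, p.2), s), ⟨(γ₁, γ₂), rfl, hts, hs⟩, by rw [add_comm, Multiset.singleton_add], rfl⟩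
  · rintro ⟨⟨⟨μ, _⟩, s⟩, ⟨⟨γ₁, γ₂⟩, rfl, hts, hs⟩, hμ, rfl⟩
    refine ⟨γ₁, γ₂, s, rfl, hs, ?_⟩
    rwa [add_comm, Multiset.singleton_add, ← show μ = s ::ₘ p.1 from hμ]

/-- Soundness for differential λ-terms: for any typed differential term
`Γ ⊢ t : ω` (in particular for `D t · u`, whose interpretation is given by
`(μ, s') ∈ [[D t · u]]_γ` iff `(μ + [s], s') ∈ [[t]]_{γ₁}` for some
`s ∈ [[u]]_{γ₂}` with `γ = γ₁ + γ₂`), the relation `{(γ, s) | s ∈ [[t]]_γ}`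
is a simulation from `!Γ` to `ω*`. -/
theorem dsoundness (ρ : ℕ → Type) (wρ : ∀ i, IS (ρ i))
    {Γ : List Ty} {ω : Ty} (t : DTm Γ ω) :
    IsSim (ctxIS ρ wρ Γ) (tyIS ρ wρ ω) (fun γ s => s ∈ dinterp ρ t γ) := by
  induction t with
  | var v => exact isSim_oneAt v
  | app t u iht ihu => exact isSim_dinterp_app iht ihu
  | lam t ih => exact ih.curry
  | zero => exact fun _ _ h => h.elim
  | add t u iht ihu => exact iht.sup ihu
  | diff t u iht ihu => exact isSim_dinterp_diff iht ihu
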